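/- arXiv:2301.08286 — 2 statements merged into one kernel-verified Lean document; each statement's English description precedes it below -/
import Mathlib

section
/- Let w : [0,∞) → ℝ be a twice continuously differentiable function satisfying w''(t) − (3 g(t)² − 1) w(t) = g'(t) for all t ≥ 0, w(0) = 0, and w(t) → 0 as t → ∞. Then w'(0) = −2/3; in particular w'(0) < 0. -/
/-!
Differentiating `g'' = W'(g)` shows that `g'` solves the linearized equation `u'' = W''(g) u`.
Hence the Wronskian `E = g' w' - g'' w` satisfies `E' = g' (w'' - W''(g) w) = (g')²`, so
`E(t) → E(0) + ∫₀^∞ (g')² = w'(0)/√2 + 2/(3√2)`. As `g'' w → 0`, also `g' w' → E(∞)`; since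
`0 < g' ≤ 1`, a nonzero limit would keep `w'` bounded away from `0` with a fixed sign, against
`w → 0`. Thus `E(∞) = 0`, i.e. `w'(0) = -2/3`.
-/

/-- The heteroclinic solution `g(t) = tanh(t/√2)` of the 1-D Allen–Cahn equation. -/
noncomputable def hetero (t : ℝ) : ℝ := Real.tanh (t / Real.sqrt 2)

open Real Filter Set Topology

namespace Real

theorem hasDerivAt_tanh (x : ℝ) : HasDerivAt tanh (1 - tanh x ^ 2) x := by
  have h := (hasDerivAt_sinh x).div (hasDerivAt_cosh x) (cosh_pos x).ne'
  rw [show tanh = fun y => sinh y / cosh y from funext tanh_eq_sinh_div_cosh]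
  refine h.congr_deriv ?_
  beta_reduce
  field_simp

theorem tanh_eq_exp_neg_two_mul (x : ℝ) : tanh x = (1 - exp (-(2 * x))) / (1 + exp (-(2 * x))) := by
  have h : exp (-x) = exp x * exp (-(2 * x)) := by rw [← exp_add]; ring_nf
  rw [tanh_eq, h]
  field_simp

theorem tendsto_tanh_atTop : Tendsto tanh atTop (𝓝 1) := by
  have h : Tendsto (fun x : ℝ => exp (-(2 * x))) atTop (𝓝 0) :=
    tendsto_exp_atBot.comp (tendsto_neg_atTop_atBot.comp (tendsto_id.const_mul_atTop two_pos))
  have := (tendsto_const_nhds (x := (1 : ℝ)).sub h).div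
    (tendsto_const_nhds (x := (1 : ℝ)).add h) (by norm_num)
  rw [sub_zero, add_zero, div_one] at this
  rw [funext tanh_eq_exp_neg_two_mul]
  exact this

end Real

theorem hetero_zero : hetero 0 = 0 := by simp [hetero]

theorem hasDerivAt_hetero (t : ℝ) : HasDerivAt hetero ((1 - hetero t ^ 2) / √2) t := by
  have h := (Real.hasDerivAt_tanh (t / √2)).comp t ((hasDerivAt_id t).div_const √2)
  exact h.congr_deriv (by simp [hetero, div_eq_mul_inv])

theorem deriv_hetero : deriv hetero = fun t => (1 - hetero t ^ 2) / √2 :=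
  funext fun t => (hasDerivAt_hetero t).deriv

theorem hasDerivAt_deriv_hetero (t : ℝ) :
    HasDerivAt (deriv hetero) (-(hetero t * (1 - hetero t ^ 2))) t := by
  rw [deriv_hetero]
  refine ((((hasDerivAt_hetero t).pow 2).const_sub 1).div_const √2).congr_deriv ?_
  field_simp
  rw [sq_sqrt zero_le_two]
  ring

theorem deriv_deriv_hetero : deriv (deriv hetero) = fun t => -(hetero t * (1 - hetero t ^ 2)) :=
  funext fun t => (hasDerivAt_deriv_hetero t).deriv

theorem hasDerivAt_deriv_deriv_hetero (t : ℝ) :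
    HasDerivAt (deriv (deriv hetero)) ((3 * hetero t ^ 2 - 1) * deriv hetero t) t := by
  rw [deriv_deriv_hetero, deriv_hetero]
  have h := hasDerivAt_hetero t
  exact ((h.mul ((h.pow 2).const_sub 1)).neg).congr_deriv (by simp only [Pi.pow_apply]; ring)

theorem deriv_hetero_pos (t : ℝ) : 0 < deriv hetero t := by
  rw [deriv_hetero]
  exact div_pos (sub_pos.2 (Real.tanh_sq_lt_one _)) (by positivity)

theorem deriv_hetero_le_one (t : ℝ) : deriv hetero t ≤ 1 := by
  rw [deriv_hetero, div_le_one (by positivity)]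
  nlinarith [Real.one_lt_sqrt_two, sq_nonneg (hetero t)]

theorem tendsto_hetero_atTop : Tendsto hetero atTop (𝓝 1) :=
  Real.tendsto_tanh_atTop.comp (tendsto_id.atTop_div_const (by positivity))

theorem tendsto_deriv_deriv_hetero_atTop : Tendsto (deriv (deriv hetero)) atTop (𝓝 0) := by
  rw [deriv_deriv_hetero]
  simpa using (tendsto_hetero_atTop.mul
    (tendsto_const_nhds (x := (1 : ℝ)).sub (tendsto_hetero_atTop.pow 2))).neg

/-- A primitive of `(g')² = (1 - g²)² / 2`; by equipartition it is also the Allen–Cahn energy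
of `g` on `[0, t]`. -/
noncomputable def heteroEnergy (t : ℝ) : ℝ := (hetero t - hetero t ^ 3 / 3) / √2

theorem hasDerivAt_heteroEnergy (t : ℝ) : HasDerivAt heteroEnergy (deriv hetero t ^ 2) t := by
  have h := hasDerivAt_hetero t
  refine ((h.sub ((h.pow 3).div_const 3)).div_const √2).congr_deriv ?_
  rw [deriv_hetero]
  field_simp
  norm_num
  ring

theorem heteroEnergy_zero : heteroEnergy 0 = 0 := by simp [heteroEnergy, hetero_zero]

theorem tendsto_heteroEnergy_atTop : Tendsto heteroEnergy atTop (𝓝 (2 / (3 * √2))) := by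
  have := (tendsto_hetero_atTop.sub ((tendsto_hetero_atTop.pow 3).div_const 3)).div_const √2
  rwa [show (2 : ℝ) / (3 * √2) = (1 - 1 ^ 3 / 3) / √2 by ring]

theorem HasDerivWithinAt.wronskian {p p' u u' : ℝ → ℝ} {s : Set ℝ} {x v h : ℝ}
    (hp : HasDerivWithinAt p (p' x) s x) (hp' : HasDerivWithinAt p' (v * p x) s x)
    (hu : HasDerivWithinAt u (u' x) s x) (hu' : HasDerivWithinAt u' (v * u x + h) s x) :
    HasDerivWithinAt (fun t => p t * u' t - p' t * u t) (p x * h) s x :=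
  ((hp.mul hu').sub (hp'.mul hu)).congr_deriv (by ring)

theorem ContDiffOn.hasDerivWithinAt_Ici_deriv {E : Type*} [NormedAddCommGroup E]
    [NormedSpace ℝ E] {f : ℝ → E} {a x : ℝ} (hf : ContDiffOn ℝ 2 f (Ici a))
    (ha : DifferentiableAt ℝ (deriv f) a) (hx : a ≤ x) :
    HasDerivWithinAt f (deriv f x) (Ici a) x ∧
      HasDerivWithinAt (deriv f) (deriv (deriv f) x) (Ici a) x := by
  rcases hx.eq_or_lt with rfl | hx
  · refine ⟨?_, ha.hasDerivAt.hasDerivWithinAt⟩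
    exact hasDerivWithinAt_Ici_of_tendsto_deriv
      ((hf.differentiableOn (by norm_num)).mono Ioi_subset_Ici_self)
      ((hf.continuousOn a self_mem_Ici).mono Ioi_subset_Ici_self) self_mem_nhdsWithin
      (ha.continuousAt.tendsto.mono_left nhdsWithin_le_nhds)
  · have hf' := hf.contDiffAt (Ici_mem_nhds hx)
    have hf'' : DifferentiableAt ℝ (deriv f) x :=
      (hf'.derivWithin (m := 1) (by norm_num)).differentiableAt one_ne_zero
    exact ⟨(hf'.differentiableAt (by norm_num)).hasDerivAt.hasDerivWithinAt,
      hf''.hasDerivAt.hasDerivWithinAt⟩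

theorem tendsto_atTop_of_eventually_le_deriv {f : ℝ → ℝ} {c : ℝ} (hc : 0 < c)
    (hf : ∀ᶠ t in atTop, DifferentiableAt ℝ f t ∧ c ≤ deriv f t) : Tendsto f atTop atTop := by
  obtain ⟨T, hT⟩ := eventually_atTop.1 hf
  have hgrowth : ∀ t ≥ T, c * (t - T) ≤ f t - f T := by
    refine fun t ht => (convex_Ici T).mul_sub_le_image_sub_of_le_deriv
      (fun x hx => (hT x hx).1.continuousAt.continuousWithinAt)
      (fun x hx => (hT x (interior_subset hx)).1.differentiableWithinAt)
      (fun x hx => (hT x (interior_subset hx)).2) T self_mem_Ici t ht ht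
  refine tendsto_atTop_mono' atTop (eventually_ge_atTop T |>.mono fun t ht => ?_)
    (tendsto_atTop_add_const_left _ (f T - c * T) (tendsto_id.const_mul_atTop hc))
  dsimp only [id]
  linarith [hgrowth t ht]

theorem not_tendsto_mul_deriv_of_pos {p f : ℝ → ℝ} {a L M : ℝ}
    (hp : ∀ᶠ t in atTop, 0 < p t ∧ p t ≤ M) (hf : ∀ᶠ t in atTop, DifferentiableAt ℝ f t)
    (hfa : Tendsto f atTop (𝓝 a)) (hL : 0 < L) :
    ¬Tendsto (fun t => p t * deriv f t) atTop (𝓝 L) := by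
  intro hpf
  obtain ⟨t₀, hpt₀, hMt₀⟩ := hp.exists
  have hM : 0 < M := hpt₀.trans_le hMt₀
  refine not_tendsto_atTop_of_tendsto_nhds hfa (tendsto_atTop_of_eventually_le_deriv
    (c := L / 2 / M) (by positivity) ?_)
  filter_upwards [hp, hf, hpf.eventually (lt_mem_nhds (half_lt_self hL))] with t ⟨hpt, hpM⟩ hft hlt
  refine ⟨hft, (div_le_iff₀ hM).2 ?_⟩
  have hderiv : 0 < deriv f t := pos_of_mul_pos_right (by linarith) hpt.le
  nlinarith

theorem eq_zero_of_tendsto_mul_deriv {p f : ℝ → ℝ} {a L M : ℝ}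
    (hp : ∀ᶠ t in atTop, 0 < p t ∧ p t ≤ M) (hf : ∀ᶠ t in atTop, DifferentiableAt ℝ f t)
    (hfa : Tendsto f atTop (𝓝 a)) (hpf : Tendsto (fun t => p t * deriv f t) atTop (𝓝 L)) :
    L = 0 := by
  rcases lt_trichotomy L 0 with hL | hL | hL
  · refine absurd ?_ (not_tendsto_mul_deriv_of_pos hp (hf.mono fun t ht => ht.neg) hfa.neg
      (neg_pos.2 hL))
    simpa only [deriv.neg', mul_neg] using hpf.neg
  · exact hL
  · exact absurd hpf (not_tendsto_mul_deriv_of_pos hp hf hfa hL)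

noncomputable def heteroWronskian (w : ℝ → ℝ) (t : ℝ) : ℝ :=
  deriv hetero t * deriv w t - deriv (deriv hetero) t * w t

theorem heteroWronskian_eq {w : ℝ → ℝ} (hw : ContDiffOn ℝ 2 w (Ici 0))
    (hw₀ : DifferentiableAt ℝ (deriv w) 0)
    (hode : ∀ t : ℝ, 0 ≤ t →
      deriv (deriv w) t - (3 * hetero t ^ 2 - 1) * w t = deriv hetero t)
    {t : ℝ} (ht : 0 ≤ t) : heteroWronskian w t = heteroWronskian w 0 + heteroEnergy t := by
  have hderiv (x : ℝ) (hx : 0 ≤ x) :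
      HasDerivWithinAt (heteroWronskian w) (deriv hetero x ^ 2) (Ici 0) x := by
    obtain ⟨hw₁, hw₂⟩ := hw.hasDerivWithinAt_Ici_deriv hw₀ hx
    rw [show deriv (deriv w) x = (3 * hetero x ^ 2 - 1) * w x + deriv hetero x by
      linarith [hode x hx]] at hw₂
    rw [sq]
    exact (hasDerivAt_deriv_hetero x).differentiableAt.hasDerivAt.hasDerivWithinAt.wronskian
      (hasDerivAt_deriv_deriv_hetero x).hasDerivWithinAt hw₁ hw₂
  refine eq_of_has_deriv_right_eq (a := 0) (b := t)
    (fun x hx => (hderiv x hx.1).mono (Ici_subset_Ici.2 hx.1))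
    (fun x _ => ((hasDerivAt_heteroEnergy x).const_add _).hasDerivWithinAt)
    (fun x hx => (hderiv x hx.1).continuousWithinAt.mono Icc_subset_Ici_self)
    (fun x _ => ((hasDerivAt_heteroEnergy x).const_add _).continuousAt.continuousWithinAt)
    (by rw [heteroEnergy_zero, add_zero]) t ⟨ht, le_rfl⟩

/-- If `w` is `C²` on `[0,∞)` with `w'' − (3g² − 1)w = g'`, `w(0) = 0` and `w → 0` at `∞`,
then `w'(0) = −2/3 < 0`. -/
theorem w_deriv_at_zero (w : ℝ → ℝ) (hw : ContDiffOn ℝ 2 w (Set.Ici 0))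
    (hode : ∀ t : ℝ, 0 ≤ t →
      deriv (deriv w) t - (3 * hetero t ^ 2 - 1) * w t = deriv hetero t)
    (h0 : w 0 = 0) (hlim : Filter.Tendsto w Filter.atTop (nhds 0)) :
    deriv w 0 = -2/3 ∧ deriv w 0 < 0 := by
  -- `deriv (deriv w) 0 = g'(0) ≠ 0` excludes the junk value `0`, so `w'` is differentiable at `0`.
  have hw₀ : DifferentiableAt ℝ (deriv w) 0 := by
    refine differentiableAt_of_deriv_ne_zero ?_
    have := hode 0 le_rfl
    rw [h0, mul_zero, sub_zero] at this
    exact this ▸ (deriv_hetero_pos 0).ne'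
  have hlimit : Tendsto (fun t => deriv hetero t * deriv w t) atTop
      (𝓝 (heteroWronskian w 0 + 2 / (3 * √2) + 0 * 0)) := by
    refine ((tendsto_heteroEnergy_atTop.const_add _).add
      (tendsto_deriv_deriv_hetero_atTop.mul hlim)).congr' ?_
    filter_upwards [eventually_ge_atTop 0] with t ht
    rw [← heteroWronskian_eq hw hw₀ hode ht, heteroWronskian]
    ring
  have hdiff : ∀ᶠ t in atTop, DifferentiableAt ℝ w t := by
    filter_upwards [eventually_gt_atTop 0] with t ht
    exact (hw.contDiffAt (Ici_mem_nhds ht)).differentiableAt (by norm_num)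
  have hzero := eq_zero_of_tendsto_mul_deriv (M := 1)
    (.of_forall fun t => ⟨deriv_hetero_pos t, deriv_hetero_le_one t⟩) hdiff hlim hlimit
  have hw' : deriv w 0 = -2 / 3 := by
    simp only [heteroWronskian, deriv_hetero, hetero_zero, h0] at hzero
    field_simp at hzero
    linarith
  exact ⟨hw', by rw [hw']; norm_num⟩
end

section
/- Fix ω > 0 and a smooth cutoff function χ : ℝ → ℝ with 0 ≤ χ ≤ 1, χ(t) = 0 for t ≤ 1, and χ(t) = 1 for t ≥ 2. For ε ∈ (0,1) define the modified heteroclinic ḡ : [0,∞) → ℝ by ḡ(t) = (1 − χ(t/(−ω ln ε))) g(t) + χ(t/(−ω ln ε)). Then the remainder R(t) := ḡ''(t) − (ḡ(t)³ − ḡ(t)) vanishes for t ∉ [−ω ln ε, −2ω ln ε], and there exist ε₀ ∈ (0,1) and C > 0 (depending only on χ and ω) such that for all ε < ε₀, sup_{t ≥ 0} |R(t)| ≤ C ε^{ω}. -/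
/-- The derivative of `hetero`. -/
noncomputable def heteroD (t : ℝ) : ℝ := (1 - hetero t ^ 2) / Real.sqrt 2

lemma hasDerivAt_tanh (x : ℝ) : HasDerivAt Real.tanh (1 - Real.tanh x ^ 2) x := by
  have hc : 0 < Real.cosh x := Real.cosh_pos x
  have h := (Real.hasDerivAt_sinh x).div (Real.hasDerivAt_cosh x) (ne_of_gt hc)
  have he : ∀ y, Real.tanh y = Real.sinh y / Real.cosh y := Real.tanh_eq_sinh_div_cosh
  have h2 : (Real.cosh x * Real.cosh x - Real.sinh x * Real.sinh x) / Real.cosh x ^ 2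
      = 1 - Real.tanh x ^ 2 := by
    have hid : Real.cosh x ^ 2 - Real.sinh x ^ 2 = 1 := Real.cosh_sq_sub_sinh_sq x
    rw [he]
    field_simp
  rw [← h2]
  have : Real.tanh = fun y => Real.sinh y / Real.cosh y := funext he
  rw [this]
  exact h

lemma hasDerivAt_hetero_s14 (t : ℝ) : HasDerivAt hetero (heteroD t) t := by
  have hs : (0:ℝ) < Real.sqrt 2 := Real.sqrt_pos.mpr (by norm_num)
  have h1 : HasDerivAt (fun s : ℝ => s / Real.sqrt 2) (1 / Real.sqrt 2) t :=
    (hasDerivAt_id t).div_const _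
  have h := (hasDerivAt_tanh (t / Real.sqrt 2)).comp t h1
  have : (1 - Real.tanh (t / Real.sqrt 2) ^ 2) * (1 / Real.sqrt 2) = heteroD t := by
    rw [heteroD, hetero]; ring
  rw [← this]; exact h

lemma hasDerivAt_heteroD (t : ℝ) : HasDerivAt heteroD (hetero t ^ 3 - hetero t) t := by
  have hs : (0:ℝ) < Real.sqrt 2 := Real.sqrt_pos.mpr (by norm_num)
  have h := (((hasDerivAt_hetero_s14 t).pow 2).const_sub 1).div_const (Real.sqrt 2)
  have he : -(↑2 * hetero t ^ (2 - 1) * heteroD t) / Real.sqrt 2 = hetero t ^ 3 - hetero t := by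
    rw [heteroD]
    have h2 : Real.sqrt 2 * Real.sqrt 2 = 2 := Real.mul_self_sqrt (by norm_num)
    field_simp
    rw [show (2:ℕ) - 1 = 1 from rfl, pow_one]
    linear_combination (-(hetero t) * (hetero t ^ 2 - 1)) * h2
  rw [← he]; exact h

lemma hetero_lt_one (t : ℝ) : hetero t < 1 := by
  rw [hetero, Real.tanh_eq_sinh_div_cosh, div_lt_one (Real.cosh_pos _)]
  exact Real.sinh_lt_cosh _

lemma hetero_nonneg {t : ℝ} (ht : 0 ≤ t) : 0 ≤ hetero t := by
  rw [hetero, Real.tanh_eq_sinh_div_cosh]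
  have h1 : 0 ≤ Real.sinh (t / Real.sqrt 2) :=
    Real.sinh_nonneg_iff.mpr (div_nonneg ht (Real.sqrt_nonneg 2))
  exact div_nonneg h1 (Real.cosh_pos _).le

lemma one_sub_hetero_le (t : ℝ) : 1 - hetero t ≤ 2 * Real.exp (-(Real.sqrt 2 * t)) := by
  set x := t / Real.sqrt 2 with hx
  have hs : (0:ℝ) < Real.sqrt 2 := Real.sqrt_pos.mpr (by norm_num)
  have h2 : Real.sqrt 2 * Real.sqrt 2 = 2 := Real.mul_self_sqrt (by norm_num)
  have hxx : Real.sqrt 2 * t = 2 * x := by rw [hx]; field_simp; linear_combination t * h2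
  have hc : 0 < Real.cosh x := Real.cosh_pos x
  have key : 1 - Real.tanh x = Real.exp (-x) / Real.cosh x := by
    rw [Real.tanh_eq_sinh_div_cosh, ← Real.cosh_sub_sinh]
    field_simp
  have hcb : Real.exp x / 2 ≤ Real.cosh x := by
    rw [Real.cosh_eq]
    nlinarith [Real.exp_pos (-x)]
  rw [hetero, ← hx, key, hxx]
  have hb : Real.exp (-x) / Real.cosh x ≤ Real.exp (-x) / (Real.exp x / 2) :=
    div_le_div_of_nonneg_left (Real.exp_pos _).le (by positivity) hcb
  have he : Real.exp (-(2*x)) = Real.exp (-x) / Real.exp x := by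
    rw [← Real.exp_sub]; ring_nf
  calc Real.exp (-x) / Real.cosh x ≤ Real.exp (-x) / (Real.exp x / 2) := hb
    _ = 2 * Real.exp (-(2*x)) := by rw [he]; field_simp

lemma cubic_bound (a v : ℝ) (ha0 : 0 ≤ a) (ha1 : a ≤ 1) (hv0 : 0 ≤ v) (hv1 : v ≤ 1) :
    |(1-v)*(a^3-a) - (((1-v)*a+v)^3 - ((1-v)*a+v))| ≤ 3*(1-a) := by
  rw [abs_le]
  constructor <;> nlinarith [mul_nonneg hv0 (sub_nonneg.mpr ha1), sq_nonneg (a+v), sq_nonneg (a-v),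
    mul_nonneg (mul_nonneg hv0 hv0) (sub_nonneg.mpr ha1), mul_nonneg ha0 hv0,
    mul_nonneg (mul_nonneg hv0 hv0) hv0, sq_nonneg (1-a), sq_nonneg v,
    mul_nonneg (mul_nonneg ha0 ha0) (sub_nonneg.mpr ha1),
    mul_nonneg (mul_nonneg hv0 (sub_nonneg.mpr hv1)) (sub_nonneg.mpr ha1),
    mul_nonneg (mul_nonneg (sub_nonneg.mpr hv1) (sub_nonneg.mpr ha1)) (sub_nonneg.mpr ha1)]

section cutoff
variable (χ : ℝ → ℝ) (hχ : ContDiff ℝ (⊤ : ℕ∞) χ)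
  (hχ0 : ∀ t : ℝ, t ≤ 1 → χ t = 0) (hχ1 : ∀ t : ℝ, 2 ≤ t → χ t = 1)

include hχ0 in
lemma deriv_chi_lt (s : ℝ) (hs : s < 1) : deriv χ s = 0 := by
  have h : χ =ᶠ[nhds s] fun _ => (0:ℝ) := by
    filter_upwards [Iio_mem_nhds hs] with u hu using hχ0 u (le_of_lt hu)
  rw [h.deriv_eq, deriv_const]

include hχ1 in
lemma deriv_chi_gt (s : ℝ) (hs : 2 < s) : deriv χ s = 0 := by
  have h : χ =ᶠ[nhds s] fun _ => (1:ℝ) := by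
    filter_upwards [Ioi_mem_nhds hs] with u hu using hχ1 u (le_of_lt hu)
  rw [h.deriv_eq, deriv_const]

include hχ0 in
lemma deriv2_chi_lt (s : ℝ) (hs : s < 1) : deriv (deriv χ) s = 0 := by
  have h : deriv χ =ᶠ[nhds s] fun _ => (0:ℝ) := by
    filter_upwards [Iio_mem_nhds hs] with u hu using deriv_chi_lt χ hχ0 u hu
  rw [h.deriv_eq, deriv_const]

include hχ1 in
lemma deriv2_chi_gt (s : ℝ) (hs : 2 < s) : deriv (deriv χ) s = 0 := by
  have h : deriv χ =ᶠ[nhds s] fun _ => (0:ℝ) := by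
    filter_upwards [Ioi_mem_nhds hs] with u hu using deriv_chi_gt χ hχ1 u hu
  rw [h.deriv_eq, deriv_const]

include hχ hχ0 hχ1 in
lemma chi_deriv_bound : ∃ M : ℝ, 0 < M ∧ (∀ s, |deriv χ s| ≤ M) ∧ (∀ s, |deriv (deriv χ) s| ≤ M) := by
  have hχ' : ContDiff ℝ ((⊤ : ℕ∞) : WithTop ℕ∞) χ := hχ.of_le (by simp)
  have hc : Continuous (deriv χ) := ((contDiff_infty_iff_deriv.mp hχ').2).continuous
  have hc2 : Continuous (deriv (deriv χ)) :=
    ((contDiff_infty_iff_deriv.mp (contDiff_infty_iff_deriv.mp hχ').2).2).continuous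
  obtain ⟨M1, hM1⟩ := (isCompact_Icc (a := (1:ℝ)) (b := 2)).exists_bound_of_continuousOn
    hc.continuousOn
  obtain ⟨M2, hM2⟩ := (isCompact_Icc (a := (1:ℝ)) (b := 2)).exists_bound_of_continuousOn
    hc2.continuousOn
  refine ⟨max (max M1 M2) 1, by positivity, fun s => ?_, fun s => ?_⟩
  · rcases lt_or_ge s 1 with h | h1
    · rw [deriv_chi_lt χ hχ0 s h]; simp
    · rcases le_or_gt s 2 with h2 | h2
      · exact le_trans (hM1 s ⟨h1, h2⟩) (le_max_of_le_left (le_max_left _ _))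
      · rw [deriv_chi_gt χ hχ1 s h2]; simp
  · rcases lt_or_ge s 1 with h | h1
    · rw [deriv2_chi_lt χ hχ0 s h]; simp
    · rcases le_or_gt s 2 with h2 | h2
      · exact le_trans (hM2 s ⟨h1, h2⟩) (le_max_of_le_left (le_max_right _ _))
      · rw [deriv2_chi_gt χ hχ1 s h2]; simp
end cutoff

set_option maxHeartbeats 1000000 in
/-- For the cutoff-modified heteroclinic `ḡ`, the Allen–Cahn remainder
`R = ḡ'' − (ḡ³ − ḡ)` is supported in `[−ω ln ε, −2ω ln ε]` and is uniformly `O(ε^ω)`. -/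
theorem modified_heteroclinic_remainder (ω : ℝ) (hω : 0 < ω) (χ : ℝ → ℝ)
    (hχ : ContDiff ℝ (⊤ : ℕ∞) χ) (hχ01 : ∀ t : ℝ, 0 ≤ χ t ∧ χ t ≤ 1)
    (hχ0 : ∀ t : ℝ, t ≤ 1 → χ t = 0) (hχ1 : ∀ t : ℝ, 2 ≤ t → χ t = 1) :
    let gbar : ℝ → ℝ → ℝ := fun ε t =>
      (1 - χ (t / (-ω * Real.log ε))) * hetero t + χ (t / (-ω * Real.log ε))
    let R : ℝ → ℝ → ℝ := fun ε t =>
      deriv (deriv (gbar ε)) t - ((gbar ε t) ^ 3 - gbar ε t)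
    (∀ ε ∈ Set.Ioo (0:ℝ) 1, ∀ t : ℝ, 0 ≤ t →
        t ∉ Set.Icc (-ω * Real.log ε) (-2 * ω * Real.log ε) → R ε t = 0) ∧
    ∃ ε₀ ∈ Set.Ioo (0:ℝ) 1, ∃ C > (0:ℝ), ∀ ε : ℝ, 0 < ε → ε < ε₀ →
      ∀ t : ℝ, 0 ≤ t → |R ε t| ≤ C * ε ^ ω := by
  intro gbar R
  obtain ⟨M, hM0, hMc, hMc2⟩ := chi_deriv_bound χ hχ hχ0 hχ1
  have hχ' : ContDiff ℝ ((⊤ : ℕ∞) : WithTop ℕ∞) χ := hχ.of_le (by simp)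
  have hχd : Differentiable ℝ χ := hχ.differentiable (by simp)
  have hcd : Differentiable ℝ (deriv χ) :=
    ((contDiff_infty_iff_deriv.mp hχ').2).differentiable (by simp)
  have hs1 : (1:ℝ) ≤ Real.sqrt 2 := by
    rw [show (1:ℝ) = Real.sqrt 1 by simp]
    exact Real.sqrt_le_sqrt (by norm_num)
  -- the global formula for the second derivative of `gbar ε`
  have key : ∀ ε : ℝ, 0 < ε → ε < 1 → ∀ t : ℝ,
      deriv (deriv (gbar ε)) t =
        deriv (deriv χ) (t / (-ω * Real.log ε)) * (1/(-ω * Real.log ε)) * (1/(-ω * Real.log ε))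
            * (1 - hetero t)
        - 2 * (deriv χ (t / (-ω * Real.log ε)) * (1/(-ω * Real.log ε))) * heteroD t
        + (1 - χ (t / (-ω * Real.log ε))) * (hetero t ^ 3 - hetero t) := by
    intro ε hε0 hε1 t
    set L := -ω * Real.log ε with hLdef
    have hcomp : ∀ s : ℝ, HasDerivAt (fun u => χ (u / L)) (deriv χ (s/L) * (1/L)) s := fun s =>
      (hχd (s/L)).hasDerivAt.comp s ((hasDerivAt_id s).div_const L)
    have hcomp2 : ∀ s : ℝ,
        HasDerivAt (fun u => deriv χ (u / L)) (deriv (deriv χ) (s/L) * (1/L)) s := fun s =>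
      by have h := (hcd (s/L)).hasDerivAt.comp s ((hasDerivAt_id s).div_const L); exact h
    have hd1 : ∀ s : ℝ, HasDerivAt (gbar ε)
        (deriv χ (s/L) * (1/L) * (1 - hetero s) + (1 - χ (s/L)) * heteroD s) s := by
      intro s
      have h2 := (((hcomp s).const_sub 1).mul (hasDerivAt_hetero_s14 s)).add (hcomp s)
      refine h2.congr_deriv ?_
      ring
    have e1 : deriv (gbar ε)
        = fun s => deriv χ (s/L) * (1/L) * (1 - hetero s) + (1 - χ (s/L)) * heteroD s :=
      funext fun s => (hd1 s).deriv
    rw [e1]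
    have hd2 : HasDerivAt
        (fun s => deriv χ (s/L) * (1/L) * (1 - hetero s) + (1 - χ (s/L)) * heteroD s)
        (deriv (deriv χ) (t/L) * (1/L) * (1/L) * (1 - hetero t)
          - 2 * (deriv χ (t/L) * (1/L)) * heteroD t
          + (1 - χ (t/L)) * (hetero t ^ 3 - hetero t)) t := by
      have hA := ((hcomp2 t).mul_const (1/L)).mul ((hasDerivAt_hetero_s14 t).const_sub 1)
      have hB := ((hcomp t).const_sub 1).mul (hasDerivAt_heteroD t)
      have h := hA.add hB
      refine h.congr_deriv ?_
      ring
    exact hd2.deriv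
  constructor
  · -- vanishing outside [L, 2L]
    intro ε hε t ht hmem
    obtain ⟨hε0, hε1⟩ := hε
    have hlog := Real.log_neg hε0 hε1
    have hL : 0 < -ω * Real.log ε := by nlinarith
    set L := -ω * Real.log ε with hLdef
    have h2L : -2 * ω * Real.log ε = 2 * L := by rw [hLdef]; ring
    rw [h2L, Set.mem_Icc, not_and_or, not_le, not_le] at hmem
    rcases hmem with h | h
    · -- t < L : here gbar = hetero near t
      have hval : χ (t / L) = 0 := hχ0 _ (le_of_lt ((div_lt_one hL).mpr h))
      have heq : gbar ε =ᶠ[nhds t] hetero := by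
        filter_upwards [Iio_mem_nhds h] with s hs
        have hz : χ (s / L) = 0 := hχ0 _ (le_of_lt ((div_lt_one hL).mpr hs))
        simp only [gbar, ← hLdef, hz]
        ring
      have h2 : deriv (deriv (gbar ε)) t = deriv (deriv hetero) t := (heq.deriv).deriv_eq
      have h3 : deriv hetero = heteroD := funext fun s => (hasDerivAt_hetero_s14 s).deriv
      have h4 : gbar ε t = hetero t := by
        simp only [gbar, ← hLdef, hval]; ring
      simp only [R, h2, h3, h4, (hasDerivAt_heteroD t).deriv]
      ring
    · -- 2L < t : here gbar = 1 near t
      have heq : gbar ε =ᶠ[nhds t] fun _ => (1:ℝ) := by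
        filter_upwards [Ioi_mem_nhds h] with s hs
        have h2s : (2:ℝ) ≤ s / L := by rw [le_div_iff₀ hL]; linarith [Set.mem_Ioi.mp hs]
        simp only [gbar, ← hLdef, hχ1 _ h2s]
        ring
      have h2 : deriv (deriv (gbar ε)) t = deriv (deriv (fun _ => (1:ℝ))) t := (heq.deriv).deriv_eq
      have h4 : gbar ε t = 1 := by
        have h2t : (2:ℝ) ≤ t / L := by rw [le_div_iff₀ hL]; linarith
        simp only [gbar, ← hLdef, hχ1 _ h2t]; ring
      simp only [R, h2, h4, deriv_const']
      norm_num
  · -- the quantitative estimate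
    refine ⟨Real.exp (-(1/ω)), ⟨Real.exp_pos _, Real.exp_lt_one_iff.mpr (neg_lt_zero.mpr (by positivity))⟩,
      2*(5*M+3), by positivity, ?_⟩
    intro ε hε0 hεlt t ht
    have hε1 : ε < 1 := lt_trans hεlt (Real.exp_lt_one_iff.mpr (neg_lt_zero.mpr (by positivity)))
    have hlog := Real.log_neg hε0 hε1
    have hL1 : 1 < -ω * Real.log ε := by
      have hlt : Real.log ε < -(1/ω) := by
        have := Real.log_lt_log hε0 hεlt
        rwa [Real.log_exp] at this
      have h1 : ω * Real.log ε < ω * (-(1/ω)) := mul_lt_mul_of_pos_left hlt hω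
      have h2 : ω * (-(1/ω)) = -1 := by field_simp
      linarith
    set L := -ω * Real.log ε with hLdef
    have hL : 0 < L := lt_trans one_pos hL1
    have hRt : R ε t =
        deriv (deriv χ) (t/L) * (1/L) * (1/L) * (1 - hetero t)
        - 2 * (deriv χ (t/L) * (1/L)) * heteroD t
        + (1 - χ (t/L)) * (hetero t ^ 3 - hetero t)
        - ((gbar ε t) ^ 3 - gbar ε t) := by
      simp only [R]
      rw [key ε hε0 hε1 t]
    have hεω : 0 < ε ^ ω := Real.rpow_pos_of_pos hε0 ω
    rcases lt_or_ge t L with hcase | hcase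
    · -- t < L : remainder vanishes
      have hq : t / L < 1 := (div_lt_one hL).mpr hcase
      have hz : χ (t / L) = 0 := hχ0 _ hq.le
      have hz1 : deriv χ (t / L) = 0 := deriv_chi_lt χ hχ0 _ hq
      have hz2 : deriv (deriv χ) (t / L) = 0 := deriv2_chi_lt χ hχ0 _ hq
      have h4 : gbar ε t = hetero t := by
        simp only [gbar, ← hLdef, hz]; ring
      rw [hRt, hz, hz1, hz2, h4]
      have : (0:ℝ) ≤ 2*(5*M+3) * ε ^ ω := by positivity
      calc |0 * (1/L) * (1/L) * (1 - hetero t) - 2 * (0 * (1/L)) * heteroD t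
            + (1 - 0) * (hetero t ^ 3 - hetero t) - (hetero t ^ 3 - hetero t)|
          = 0 := by rw [abs_eq_zero]; ring
        _ ≤ 2*(5*M+3) * ε ^ ω := this
    · -- L ≤ t : use decay of 1 - hetero
      set a := hetero t with hadef
      have ha0 : 0 ≤ a := hetero_nonneg ht
      have ha1 : a < 1 := hetero_lt_one t
      obtain ⟨hv0, hv1⟩ := hχ01 (t / L)
      have hinv : |1/L| ≤ 1 := by
        rw [abs_of_pos (by positivity)]
        rw [div_le_one hL]; linarith
      have hDnn : 0 ≤ heteroD t := by
        rw [heteroD, ← hadef]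
        have : 0 ≤ 1 - a ^ 2 := by nlinarith
        positivity
      have hDb : |heteroD t| ≤ 2 * (1 - a) := by
        rw [abs_of_nonneg hDnn, heteroD, ← hadef]
        rw [div_le_iff₀ (by positivity : (0:ℝ) < Real.sqrt 2)]
        nlinarith
      have hgb : gbar ε t = (1 - χ (t/L)) * a + χ (t/L) := by
        simp only [gbar, ← hLdef, ← hadef]
      have hT1 : |deriv (deriv χ) (t/L) * (1/L) * (1/L) * (1 - a)| ≤ M * (1 - a) := by
        rw [abs_mul, abs_mul, abs_mul, abs_of_nonneg (by linarith : (0:ℝ) ≤ 1 - a)]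
        calc |deriv (deriv χ) (t/L)| * |1/L| * |1/L| * (1 - a)
            ≤ M * 1 * 1 * (1 - a) := by
              gcongr <;> first | exact hMc2 _ | exact hinv | linarith | positivity
          _ = M * (1 - a) := by ring
      have hT2 : |2 * (deriv χ (t/L) * (1/L)) * heteroD t| ≤ 4 * M * (1 - a) := by
        rw [abs_mul, abs_mul, abs_mul]
        calc |(2:ℝ)| * (|deriv χ (t/L)| * |1/L|) * |heteroD t|
            ≤ 2 * (M * 1) * (2 * (1 - a)) := by
              rw [show |(2:ℝ)| = 2 by norm_num]
              gcongr <;> first | exact hMc _ | exact hinv | exact hDb | linarith | positivity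
          _ = 4 * M * (1 - a) := by ring
      have hE : |(1 - χ (t/L)) * (a ^ 3 - a) - ((gbar ε t) ^ 3 - gbar ε t)| ≤ 3 * (1 - a) := by
        rw [hgb]
        exact cubic_bound a (χ (t/L)) ha0 ha1.le hv0 hv1
      have hsplit : R ε t =
          deriv (deriv χ) (t/L) * (1/L) * (1/L) * (1 - a)
          + (-(2 * (deriv χ (t/L) * (1/L)) * heteroD t))
          + ((1 - χ (t/L)) * (a ^ 3 - a) - ((gbar ε t) ^ 3 - gbar ε t)) := by
        rw [hRt]; ring
      have habs : |R ε t| ≤ (5*M+3) * (1 - a) := by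
        rw [hsplit]
        refine le_trans (abs_add_three _ _ _) ?_
        rw [abs_neg]
        linarith
      have hd : 1 - a ≤ 2 * ε ^ ω := by
        calc 1 - a ≤ 2 * Real.exp (-(Real.sqrt 2 * t)) := one_sub_hetero_le t
          _ ≤ 2 * Real.exp (-(Real.sqrt 2 * L)) := by
              have : -(Real.sqrt 2 * t) ≤ -(Real.sqrt 2 * L) := by nlinarith
              have := Real.exp_le_exp.mpr this
              linarith
          _ = 2 * ε ^ (Real.sqrt 2 * ω) := by
              rw [Real.rpow_def_of_pos hε0]
              congr 1
              rw [hLdef]; ring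
          _ ≤ 2 * ε ^ ω := by
              have hle : ω ≤ Real.sqrt 2 * ω := by nlinarith
              have := Real.rpow_le_rpow_of_exponent_ge hε0 hε1.le hle
              linarith
      calc |R ε t| ≤ (5*M+3) * (1 - a) := habs
        _ ≤ (5*M+3) * (2 * ε ^ ω) := by
            exact mul_le_mul_of_nonneg_left hd (by positivity)
        _ = 2*(5*M+3) * ε ^ ω := by ring
end
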